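/- If the stationary process (X_t)_{t∈ℤ} is ergodic, then P-almost everywhere: (i) sup_{i≥1} |λ_i(C) − λ_i(C_n)| → 0 as n → ∞, and (ii) ‖P_j(C_n) − P_j(C)‖ → 0 as n → ∞ for every j ≥ 1, where C := C(0) = E[φ(X₀) ⊗ φ(X₀)] and C_n := C_n(0) = (1/n)∑_{t=1}^n φ(X_t) ⊗ φ(X_t). In both cases the convergence holds with the same rate as the operator-norm convergence C_n → C. -/

import Mathlib

/- Spectral consistency of kernel PCA with ergodic data: if the stationary
process is ergodic then, almost everywhere, the eigenvalues (ordered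
nonincreasingly, with multiplicities, extended by zeros and encoded via
orthonormal eigenbases) and the spectral projectors of the empirical covariance
operator C_n = C_n(0) converge to those of C = C(0); moreover the convergence
is dominated by the operator-norm error ‖C_n − C‖ (hence it occurs with the
same rate). -/

open MeasureTheory Filter Function Submodule
open scoped RealInnerProductSpace Topology

/-- The rank-one operator `y ⊗ x : z ↦ ⟪x, z⟫ • y` on a real Hilbert space. -/
noncomputable def rankOne {H : Type*} [NormedAddCommGroup H] [InnerProductSpace ℝ H]
    (y x : H) : H →L[ℝ] H :=
  (innerSL ℝ x).smulRight y

section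
variable {Ω : Type*} [MeasurableSpace Ω] (P : Measure Ω)
  {E : Type*} {H : Type*} [NormedAddCommGroup H] [InnerProductSpace ℝ H]
  [CompleteSpace H]
  (X : ℤ → Ω → E) (φ : E → H)

/-- The kernel covariance operator `C = C(0) = E[φ(X₀) ⊗ φ(X₀)]` on `H`. -/
noncomputable def CovOp : H →L[ℝ] H :=
  ∫ ω, rankOne (φ (X 0 ω)) (φ (X 0 ω)) ∂P

/-- The empirical covariance operator
`C_n = (1/n) ∑_{t=1}^n φ(X_t) ⊗ φ(X_t)` on `H`. -/
noncomputable def CovEmp (n : ℕ) (ω : Ω) : H →L[ℝ] H :=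
  (n : ℝ)⁻¹ • ∑ t ∈ Finset.Icc 1 n, rankOne (φ (X (t : ℤ) ω)) (φ (X (t : ℤ) ω))

end


set_option linter.unusedSectionVars false
set_option maxHeartbeats 1000000

section Spectral
variable {H : Type*} [NormedAddCommGroup H] [InnerProductSpace ℝ H] [CompleteSpace H]

variable {H : Type*} [NormedAddCommGroup H] [InnerProductSpace ℝ H] [CompleteSpace H]

/-- Hilbert basis from orthonormal family with dense span. -/
noncomputable def hbasis {f : ℕ → H} (hf : Orthonormal ℝ f)
    (hsp : Dense (Submodule.span ℝ (Set.range f) : Set H)) : HilbertBasis ℕ ℝ H :=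
  HilbertBasis.mk hf (Submodule.dense_iff_topologicalClosure_eq_top.1 hsp).ge

lemma hbasis_coe {f : ℕ → H} (hf : Orthonormal ℝ f)
    (hsp : Dense (Submodule.span ℝ (Set.range f) : Set H)) : ⇑(hbasis hf hsp) = f := by
  exact HilbertBasis.coe_mk _ _

lemma hasSum_inner_expansion {f : ℕ → H} (hf : Orthonormal ℝ f)
    (hsp : Dense (Submodule.span ℝ (Set.range f) : Set H)) (u : H) :
    HasSum (fun i => ⟪f i, u⟫ • f i) u := by
  have hc : ∀ i, (hbasis hf hsp) i = f i := fun i => congrFun (hbasis_coe hf hsp) i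
  have h := (hbasis hf hsp).hasSum_repr u
  simp only [HilbertBasis.repr_apply_apply, hc] at h
  exact h

lemma parseval_hasSum {f : ℕ → H} (hf : Orthonormal ℝ f)
    (hsp : Dense (Submodule.span ℝ (Set.range f) : Set H)) (u : H) :
    HasSum (fun i => ⟪f i, u⟫ ^ 2) (‖u‖ ^ 2) := by
  have hc : ∀ i, (hbasis hf hsp) i = f i := fun i => congrFun (hbasis_coe hf hsp) i
  have h := (hbasis hf hsp).hasSum_inner_mul_inner u u
  rw [real_inner_self_eq_norm_sq] at h
  simp only [hc] at h
  have hfun : (fun i => ⟪f i, u⟫ ^ 2) = fun i => ⟪u, f i⟫ * ⟪f i, u⟫ := by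
    funext i
    rw [sq, real_inner_comm u (f i)]
  rw [hfun]
  exact h

lemma eig_hasSum {B : H →L[ℝ] H} {f : ℕ → H} (hf : Orthonormal ℝ f)
    (hsp : Dense (Submodule.span ℝ (Set.range f) : Set H))
    {b : ℕ → ℝ} (hd : ∀ i, B (f i) = b i • f i) (u v : H) :
    HasSum (fun i => b i * (⟪f i, u⟫ * ⟪f i, v⟫)) ⟪B u, v⟫ := by
  have h1 := (hasSum_inner_expansion hf hsp u).mapL B
  simp only [ContinuousLinearMap.map_smul, hd] at h1
  have h2 := h1.mapL (innerSL ℝ v)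
  simp only [innerSL_apply_apply, inner_smul_right] at h2
  rw [real_inner_comm v (B u)]
  have hfun : (fun i => b i * (⟪f i, u⟫ * ⟪f i, v⟫)) = fun i => ⟪f i, u⟫ * (b i * ⟪v, f i⟫) := by
    funext i
    rw [real_inner_comm v (f i)]
    ring
  rw [hfun]
  exact h2

lemma eig_inner_apply {B : H →L[ℝ] H} {f : ℕ → H} (hf : Orthonormal ℝ f)
    (hsp : Dense (Submodule.span ℝ (Set.range f) : Set H))
    {b : ℕ → ℝ} (hd : ∀ i, B (f i) = b i • f i) (u : H) (j : ℕ) :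
    ⟪f j, B u⟫ = b j * ⟪f j, u⟫ := by
  have h := eig_hasSum hf hsp hd u (f j)
  have h2 : HasSum (fun i => if i = j then b j * ⟪f j, u⟫ else 0) ⟪B u, f j⟫ := by
    convert h using 2 with i
    rcases eq_or_ne i j with rfl | hij
    · simp [orthonormal_iff_ite.1 hf i i, hf.1 i]
    · simp [hij, orthonormal_iff_ite.1 hf i j, hij]
  rw [real_inner_comm]
  exact (h2.unique (hasSum_ite_eq j _))

lemma eig_abs_le_norm {B : H →L[ℝ] H} {f : ℕ → H} (hf : Orthonormal ℝ f)
    {b : ℕ → ℝ} (hd : ∀ i, B (f i) = b i • f i) (i : ℕ) : |b i| ≤ ‖B‖ := by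
  have h1 : ‖B (f i)‖ = |b i| := by
    rw [hd i, norm_smul, hf.1 i]
    simp [Real.norm_eq_abs]
  have := B.le_opNorm (f i)
  rw [h1, hf.1 i, mul_one] at this
  exact this


lemma weyl_one_sided {A B : H →L[ℝ] H} {e f : ℕ → H} {a b : ℕ → ℝ}
    (he : Orthonormal ℝ e)
    (hAe : ∀ i, A (e i) = a i • e i) (ha : Antitone a)
    (hf : Orthonormal ℝ f) (hsf : Dense (span ℝ (Set.range f) : Set H))
    (hBf : ∀ i, B (f i) = b i • f i) (hb : Antitone b) (k : ℕ) :
    a k ≤ b k + ‖A - B‖ := by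
  classical
  -- the "test vector" map
  let L : (Fin (k+1) → ℝ) →ₗ[ℝ] (Fin k → ℝ) :=
    { toFun := fun c i => ∑ j, c j * ⟪f (i : ℕ), e (j : ℕ)⟫
      map_add' := by
        intro c d; funext i
        simp [add_mul, Finset.sum_add_distrib]
      map_smul' := by
        intro r c; funext i
        simp [Finset.mul_sum, mul_assoc] }
  have hni : ¬ Function.Injective L := by
    intro hinj
    have h1 := LinearMap.finrank_le_finrank_of_injective hinj
    simp only [Module.finrank_pi, Fintype.card_fin] at h1
    omega
  obtain ⟨c₁, c₂, hLc, hne⟩ : ∃ x y, L x = L y ∧ x ≠ y := by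
    by_contra h
    push_neg at h
    exact hni fun x y hxy => h x y hxy
  set c : Fin (k+1) → ℝ := c₁ - c₂ with hc
  have hcne : c ≠ 0 := sub_ne_zero.2 hne
  have hLc0 : ∀ i : Fin k, ∑ j, c j * ⟪f (i : ℕ), e (j : ℕ)⟫ = 0 := by
    intro i
    have : L c = 0 := by rw [hc, map_sub, hLc, sub_self]
    exact congrFun this i
  set y : H := ∑ j : Fin (k+1), c j • e (j : ℕ) with hy
  have hinner_e : ∀ j : Fin (k+1), ⟪e (j : ℕ), y⟫ = c j := by
    intro j
    rw [hy, inner_sum]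
    have : ∀ j' : Fin (k+1), ⟪e (j : ℕ), c j' • e (j' : ℕ)⟫ = if j' = j then c j else 0 := by
      intro j'
      rw [real_inner_smul_right, orthonormal_iff_ite.1 he]
      by_cases h : j' = j
      · simp [h]
      · have hne2 : ¬ (j : ℕ) = (j' : ℕ) := fun hh => h (Fin.val_inj.1 hh).symm
        simp [hne2, h]
    rw [Finset.sum_congr rfl fun j' _ => this j']
    simp
  have hny : ‖y‖ ^ 2 = ∑ j : Fin (k+1), c j ^ 2 := by
    rw [← real_inner_self_eq_norm_sq, hy, sum_inner]
    refine Finset.sum_congr rfl fun j _ => ?_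
    rw [real_inner_smul_left, ← hy, hinner_e j, sq]
  have hynz : y ≠ 0 := by
    intro h0
    apply hcne
    funext j
    have := hinner_e j
    rw [h0, inner_zero_right] at this
    simp [← this]
  have hN : (0:ℝ) < ‖y‖ ^ 2 := by
    have := norm_pos_iff.2 hynz
    positivity
  -- lower bound for ⟪A y, y⟫
  have hAy : a k * ‖y‖ ^ 2 ≤ ⟪A y, y⟫ := by
    have hexp : ⟪A y, y⟫ = ∑ j : Fin (k+1), a (j:ℕ) * c j ^ 2 := by
      rw [hy, map_sum, sum_inner]
      refine Finset.sum_congr rfl fun j _ => ?_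
      rw [ContinuousLinearMap.map_smul, hAe, real_inner_smul_left, real_inner_smul_left,
        ← hy, hinner_e j]
      ring
    rw [hexp, hny, Finset.mul_sum]
    refine Finset.sum_le_sum fun j _ => ?_
    have : a k ≤ a (j : ℕ) := ha (Fin.is_le j)
    nlinarith [sq_nonneg (c j)]
  -- upper bound for ⟪B y, y⟫
  have hBy : ⟪B y, y⟫ ≤ b k * ‖y‖ ^ 2 := by
    have h1 := eig_hasSum hf hsf hBf y y
    have h2 := (parseval_hasSum hf hsf y).mul_left (b k)
    refine hasSum_le (fun i => ?_) h1 h2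
    rcases lt_or_ge i k with hik | hik
    · have hfi : ⟪f i, y⟫ = 0 := by
        rw [hy, inner_sum]
        have := hLc0 ⟨i, hik⟩
        simp only [real_inner_smul_right]
        simpa [mul_comm] using this
      simp [hfi]
    · have : b i ≤ b k := hb hik
      have h3 : (0:ℝ) ≤ ⟪f i, y⟫ * ⟪f i, y⟫ := mul_self_nonneg _
      calc b i * (⟪f i, y⟫ * ⟪f i, y⟫) ≤ b k * (⟪f i, y⟫ * ⟪f i, y⟫) :=
            mul_le_mul_of_nonneg_right this h3
        _ = b k * ⟪f i, y⟫ ^ 2 := by ring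
  -- the perturbation bound
  have hpert : ⟪A y, y⟫ - ⟪B y, y⟫ ≤ ‖A - B‖ * ‖y‖ ^ 2 := by
    have h1 : ⟪A y, y⟫ - ⟪B y, y⟫ = ⟪(A - B) y, y⟫ := by
      rw [ContinuousLinearMap.sub_apply, inner_sub_left]
    rw [h1]
    calc ⟪(A - B) y, y⟫ ≤ ‖(A - B) y‖ * ‖y‖ := real_inner_le_norm _ _
      _ ≤ (‖A - B‖ * ‖y‖) * ‖y‖ :=
          mul_le_mul_of_nonneg_right ((A - B).le_opNorm y) (norm_nonneg y)
      _ = ‖A - B‖ * ‖y‖ ^ 2 := by ring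
  have : a k * ‖y‖ ^ 2 ≤ (b k + ‖A - B‖) * ‖y‖ ^ 2 := by nlinarith
  exact le_of_mul_le_mul_right (by linarith [this]) hN

lemma weyl {A B : H →L[ℝ] H} {e f : ℕ → H} {a b : ℕ → ℝ}
    (he : Orthonormal ℝ e) (hse : Dense (span ℝ (Set.range e) : Set H))
    (hAe : ∀ i, A (e i) = a i • e i) (ha : Antitone a)
    (hf : Orthonormal ℝ f) (hsf : Dense (span ℝ (Set.range f) : Set H))
    (hBf : ∀ i, B (f i) = b i • f i) (hb : Antitone b) (k : ℕ) :
    |a k - b k| ≤ ‖A - B‖ := by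
  rw [abs_sub_le_iff]
  constructor
  · have := weyl_one_sided he hAe ha hf hsf hBf hb k
    linarith
  · have := weyl_one_sided hf hBf hb he hse hAe ha k
    rw [norm_sub_rev] at this
    linarith


lemma rankOne_apply (y x z : H) : rankOne y x z = ⟪x, z⟫ • y := rfl

lemma projSum_apply (f : ℕ → H) (Δ : Finset ℕ) (x : H) :
    (∑ i ∈ Δ, rankOne (f i) (f i)) x = ∑ i ∈ Δ, ⟪f i, x⟫ • f i := by
  rw [ContinuousLinearMap.sum_apply]
  exact Finset.sum_congr rfl fun i _ => rfl

lemma inner_projSum {f : ℕ → H} (hf : Orthonormal ℝ f) (Δ : Finset ℕ) (x : H) (j : ℕ) :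
    ⟪f j, (∑ i ∈ Δ, rankOne (f i) (f i)) x⟫ = if j ∈ Δ then ⟪f j, x⟫ else 0 := by
  classical
  rw [projSum_apply, inner_sum]
  have h : ∀ i ∈ Δ, ⟪f j, ⟪f i, x⟫ • f i⟫ = if i = j then ⟪f j, x⟫ else 0 := by
    intro i _
    rw [real_inner_smul_right, orthonormal_iff_ite.1 hf]
    by_cases h : i = j
    · subst h; simp
    · have : ¬ j = i := fun hh => h hh.symm
      simp [h, this]
  rw [Finset.sum_congr rfl h, Finset.sum_ite_eq' Δ j]

lemma projSum_norm_sq {f : ℕ → H} (hf : Orthonormal ℝ f) (Δ : Finset ℕ) (c : ℕ → ℝ) :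
    ‖∑ i ∈ Δ, c i • f i‖ ^ 2 = ∑ i ∈ Δ, c i ^ 2 := by
  classical
  rw [← real_inner_self_eq_norm_sq, sum_inner]
  refine Finset.sum_congr rfl fun i hi => ?_
  rw [real_inner_smul_left, inner_sum]
  have h : ∀ j ∈ Δ, ⟪f i, c j • f j⟫ = if j = i then c i else 0 := by
    intro j _
    rw [real_inner_smul_right, orthonormal_iff_ite.1 hf]
    by_cases h : j = i
    · subst h; simp
    · have : ¬ i = j := fun hh => h hh.symm
      simp [h, this]
  rw [Finset.sum_congr rfl h, Finset.sum_ite_eq' Δ i, if_pos hi, sq]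

lemma projSum_norm_le {f : ℕ → H} (hf : Orthonormal ℝ f) (Δ : Finset ℕ) (x : H) :
    ‖(∑ i ∈ Δ, rankOne (f i) (f i)) x‖ ≤ ‖x‖ := by
  have h1 : ‖(∑ i ∈ Δ, rankOne (f i) (f i)) x‖ ^ 2 ≤ ‖x‖ ^ 2 := by
    rw [projSum_apply, projSum_norm_sq hf]
    have := hf.sum_inner_products_le (s := Δ) x
    simpa [Real.norm_eq_abs, sq_abs] using this
  nlinarith [norm_nonneg ((∑ i ∈ Δ, rankOne (f i) (f i)) x), norm_nonneg x]

lemma projSum_symm (f : ℕ → H) (Δ : Finset ℕ) (u v : H) :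
    ⟪(∑ i ∈ Δ, rankOne (f i) (f i)) u, v⟫ = ⟪u, (∑ i ∈ Δ, rankOne (f i) (f i)) v⟫ := by
  rw [projSum_apply, projSum_apply, sum_inner, inner_sum]
  refine Finset.sum_congr rfl fun i _ => ?_
  rw [real_inner_smul_left, real_inner_smul_right, real_inner_comm u (f i)]
  ring

/-- Core gap estimate. -/
lemma gap_core {B : H →L[ℝ] H} {f : ℕ → H} (hf : Orthonormal ℝ f)
    (hsf : Dense (span ℝ (Set.range f) : Set H))
    {b : ℕ → ℝ} (hBf : ∀ i, B (f i) = b i • f i)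
    {μ γ : ℝ} (hγ : 0 ≤ γ) (Δ : Finset ℕ) (hgapb : ∀ i ∉ Δ, γ ≤ |b i - μ|) (y : H) :
    γ * ‖y - (∑ i ∈ Δ, rankOne (f i) (f i)) y‖ ≤ ‖B y - μ • y‖ := by
  classical
  set z := y - (∑ i ∈ Δ, rankOne (f i) (f i)) y with hz
  set w := B y - μ • y with hw
  have hfz : ∀ i, ⟪f i, z⟫ = if i ∈ Δ then 0 else ⟪f i, y⟫ := by
    intro i
    rw [hz, inner_sub_right, inner_projSum hf]
    by_cases h : i ∈ Δ <;> simp [h]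
  have hfw : ∀ i, ⟪f i, w⟫ = (b i - μ) * ⟪f i, y⟫ := by
    intro i
    rw [hw, inner_sub_right, eig_inner_apply hf hsf hBf, real_inner_smul_right]
    ring
  have h1 := (parseval_hasSum hf hsf z).mul_left (γ ^ 2)
  have h2 := parseval_hasSum hf hsf w
  have hle : γ ^ 2 * ‖z‖ ^ 2 ≤ ‖w‖ ^ 2 := by
    refine hasSum_le (fun i => ?_) h1 h2
    rw [hfz, hfw]
    by_cases h : i ∈ Δ
    · simp [h]
      positivity
    · rw [if_neg h]
      have hb := hgapb i h
      have h3 : γ ^ 2 ≤ (b i - μ) ^ 2 := by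
        have := abs_nonneg (b i - μ)
        nlinarith [sq_abs (b i - μ)]
      nlinarith [sq_nonneg (⟪f i, y⟫ : ℝ)]
  nlinarith [norm_nonneg z, norm_nonneg w, mul_nonneg hγ (norm_nonneg z)]

/-- Bound on `(B - μ)` applied to the projected vector. -/
lemma proj_eig_bound {B : H →L[ℝ] H} {f : ℕ → H} (hf : Orthonormal ℝ f)
    {b : ℕ → ℝ} (hBf : ∀ i, B (f i) = b i • f i)
    {μ ε : ℝ} (hε : 0 ≤ ε) (Δ : Finset ℕ) (hb : ∀ i ∈ Δ, |b i - μ| ≤ ε) (x : H) :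
    ‖B ((∑ i ∈ Δ, rankOne (f i) (f i)) x) - μ • (∑ i ∈ Δ, rankOne (f i) (f i)) x‖
      ≤ ε * ‖x‖ := by
  classical
  have hrepr : B ((∑ i ∈ Δ, rankOne (f i) (f i)) x)
      - μ • (∑ i ∈ Δ, rankOne (f i) (f i)) x
      = ∑ i ∈ Δ, ((b i - μ) * ⟪f i, x⟫) • f i := by
    rw [projSum_apply, map_sum, Finset.smul_sum, ← Finset.sum_sub_distrib]
    refine Finset.sum_congr rfl fun i _ => ?_
    rw [ContinuousLinearMap.map_smul, hBf i, smul_smul, smul_smul, ← sub_smul]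
    congr 1
    ring
  have hsq : ‖B ((∑ i ∈ Δ, rankOne (f i) (f i)) x)
      - μ • (∑ i ∈ Δ, rankOne (f i) (f i)) x‖ ^ 2 ≤ (ε * ‖x‖) ^ 2 := by
    rw [hrepr, projSum_norm_sq hf]
    have h1 : ∑ i ∈ Δ, ((b i - μ) * ⟪f i, x⟫) ^ 2 ≤ ∑ i ∈ Δ, ε ^ 2 * ⟪f i, x⟫ ^ 2 := by
      refine Finset.sum_le_sum fun i hi => ?_
      have := hb i hi
      have h2 : (b i - μ) ^ 2 ≤ ε ^ 2 := by nlinarith [sq_abs (b i - μ), abs_nonneg (b i - μ)]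
      nlinarith [sq_nonneg (⟪f i, x⟫ : ℝ)]
    have h2 : ∑ i ∈ Δ, ε ^ 2 * ⟪f i, x⟫ ^ 2 ≤ ε ^ 2 * ‖x‖ ^ 2 := by
      rw [← Finset.mul_sum]
      have := hf.sum_inner_products_le (s := Δ) x
      have h3 : ∑ i ∈ Δ, ⟪f i, x⟫ ^ 2 ≤ ‖x‖ ^ 2 := by
        simpa [Real.norm_eq_abs, sq_abs] using this
      nlinarith [sq_nonneg ε]
    calc ∑ i ∈ Δ, ((b i - μ) * ⟪f i, x⟫) ^ 2 ≤ ε ^ 2 * ‖x‖ ^ 2 := le_trans h1 h2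
      _ = (ε * ‖x‖) ^ 2 := by ring
  nlinarith [norm_nonneg (B ((∑ i ∈ Δ, rankOne (f i) (f i)) x)
      - μ • (∑ i ∈ Δ, rankOne (f i) (f i)) x), mul_nonneg hε (norm_nonneg x)]

/-- Davis–Kahan-type bound for the spectral projectors. -/
lemma davis_kahan {A B : H →L[ℝ] H} {e f : ℕ → H} {a b : ℕ → ℝ}
    (he : Orthonormal ℝ e) (hse : Dense (span ℝ (Set.range e) : Set H))
    (hAe : ∀ i, A (e i) = a i • e i) (ha : Antitone a)
    (hf : Orthonormal ℝ f) (hsf : Dense (span ℝ (Set.range f) : Set H))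
    (hBf : ∀ i, B (f i) = b i • f i) (hb : Antitone b)
    {μ g : ℝ} (hg : 0 < g) (Δ : Finset ℕ) (hΔ : ∀ i, i ∈ Δ ↔ a i = μ)
    (hgap : ∀ i, a i ≠ μ → g ≤ |a i - μ|) :
    ‖(∑ i ∈ Δ, rankOne (e i) (e i)) - ∑ i ∈ Δ, rankOne (f i) (f i)‖
      ≤ (4 / g) * ‖A - B‖ := by
  classical
  set ε := ‖A - B‖ with hε
  have hε0 : 0 ≤ ε := norm_nonneg _
  set P : H →L[ℝ] H := ∑ i ∈ Δ, rankOne (e i) (e i) with hP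
  set Q : H →L[ℝ] H := ∑ i ∈ Δ, rankOne (f i) (f i) with hQ
  rcases le_or_gt (g / 2) ε with hcase | hcase
  · -- trivial case
    have h1 : ‖P - Q‖ ≤ 2 := by
      refine le_trans (norm_sub_le _ _) ?_
      have hPn : ‖P‖ ≤ 1 := P.opNorm_le_bound zero_le_one
        (fun x => by rw [one_mul]; exact projSum_norm_le he Δ x)
      have hQn : ‖Q‖ ≤ 1 := Q.opNorm_le_bound zero_le_one
        (fun x => by rw [one_mul]; exact projSum_norm_le hf Δ x)
      linarith
    have h2 : (2:ℝ) ≤ (4 / g) * ε := by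
      rw [div_mul_eq_mul_div, le_div_iff₀ hg]
      linarith
    linarith
  · -- main case: ε < g / 2
    have hweyl : ∀ i, |a i - b i| ≤ ε := fun i => weyl he hse hAe ha hf hsf hBf hb i
    -- Side 1 : ‖P x - Q (P x)‖ ≤ (2 * ε / g) * ‖x‖
    have side1 : ∀ x : H, ‖P x - Q (P x)‖ ≤ 2 * ε / g * ‖x‖ := by
      intro x
      have hgapb : ∀ i ∉ Δ, g - ε ≤ |b i - μ| := by
        intro i hi
        have h1 : g ≤ |a i - μ| := hgap i (fun h => hi ((hΔ i).2 h))
        have h2 := hweyl i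
        have h3 : |a i - μ| - |a i - b i| ≤ |b i - μ| := by
          have := abs_sub_abs_le_abs_sub (a i - μ) (a i - b i)
          have h4 : (a i - μ) - (a i - b i) = b i - μ := by ring
          rw [h4] at this
          linarith
        linarith
      have hcore := gap_core hf hsf hBf (μ := μ) (by linarith : (0:ℝ) ≤ g - ε) Δ hgapb (P x)
      have hAP : A (P x) = μ • P x := by
        rw [hP, projSum_apply, map_sum, Finset.smul_sum]
        refine Finset.sum_congr rfl fun i hi => ?_
        rw [ContinuousLinearMap.map_smul, hAe i, (hΔ i).1 hi, smul_smul, smul_smul, mul_comm]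
      have hBP : ‖B (P x) - μ • P x‖ ≤ ε * ‖x‖ := by
        have : B (P x) - μ • P x = (B - A) (P x) + (A (P x) - μ • P x) := by
          rw [ContinuousLinearMap.sub_apply]; abel
        rw [this, hAP, sub_self, add_zero]
        calc ‖(B - A) (P x)‖ ≤ ‖B - A‖ * ‖P x‖ := (B - A).le_opNorm _
          _ ≤ ε * ‖x‖ := by
            rw [norm_sub_rev, ← hε]
            exact mul_le_mul_of_nonneg_left (projSum_norm_le he Δ x) hε0
      have h5 : (g - ε) * ‖P x - Q (P x)‖ ≤ ε * ‖x‖ := le_trans hcore hBP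
      have h6 : (g / 2) * ‖P x - Q (P x)‖ ≤ ε * ‖x‖ := by
        have := mul_le_mul_of_nonneg_right (by linarith : g / 2 ≤ g - ε)
          (norm_nonneg (P x - Q (P x)))
        linarith
      rw [div_mul_eq_mul_div, le_div_iff₀ hg]
      nlinarith
    -- Side 2 : ‖Q y - P (Q y)‖ ≤ (2 * ε / g) * ‖y‖
    have side2 : ∀ y : H, ‖Q y - P (Q y)‖ ≤ 2 * ε / g * ‖y‖ := by
      intro y
      have hgapa : ∀ i ∉ Δ, g ≤ |a i - μ| := fun i hi => hgap i (fun h => hi ((hΔ i).2 h))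
      have hcore := gap_core he hse hAe (μ := μ) (le_of_lt hg) Δ hgapa (Q y)
      have hAQ : ‖A (Q y) - μ • Q y‖ ≤ 2 * ε * ‖y‖ := by
        have hsplit : A (Q y) - μ • Q y = (A - B) (Q y) + (B (Q y) - μ • Q y) := by
          rw [ContinuousLinearMap.sub_apply]; abel
        have h1 : ‖(A - B) (Q y)‖ ≤ ε * ‖y‖ := by
          calc ‖(A - B) (Q y)‖ ≤ ‖A - B‖ * ‖Q y‖ := (A - B).le_opNorm _
            _ ≤ ε * ‖y‖ := mul_le_mul_of_nonneg_left (projSum_norm_le hf Δ y) hε0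
        have h2 : ‖B (Q y) - μ • Q y‖ ≤ ε * ‖y‖ := by
          refine proj_eig_bound hf hBf hε0 Δ (fun i hi => ?_) y
          have h3 := hweyl i
          have h4 : a i = μ := (hΔ i).1 hi
          rw [← h4]
          rw [abs_sub_comm]
          exact h3
        calc ‖A (Q y) - μ • Q y‖ ≤ ‖(A - B) (Q y)‖ + ‖B (Q y) - μ • Q y‖ := by
              rw [hsplit]; exact norm_add_le _ _
          _ ≤ 2 * ε * ‖y‖ := by linarith
      have h5 : g * ‖Q y - P (Q y)‖ ≤ 2 * ε * ‖y‖ := le_trans hcore hAQ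
      rw [div_mul_eq_mul_div, le_div_iff₀ hg]
      nlinarith
    -- adjoint trick for ‖Q (x - P x)‖
    have side2' : ∀ x : H, ‖Q x - Q (P x)‖ ≤ 2 * ε / g * ‖x‖ := by
      intro x
      set u := Q x - Q (P x) with hu
      have hQsymm : ∀ u v : H, ⟪Q u, v⟫ = ⟪u, Q v⟫ := fun u v => by
        rw [hQ]; exact projSum_symm f Δ u v
      have hPsymm : ∀ u v : H, ⟪P u, v⟫ = ⟪u, P v⟫ := fun u v => by
        rw [hP]; exact projSum_symm e Δ u v
      have huq : u = Q (x - P x) := by rw [hu, map_sub]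
      have hsq : ‖u‖ ^ 2 ≤ 2 * ε / g * ‖x‖ * ‖u‖ := by
        have h1 : ‖u‖ ^ 2 = ⟪x - P x, Q u⟫ := by
          rw [← real_inner_self_eq_norm_sq]
          nth_rewrite 1 [huq]
          exact hQsymm (x - P x) u
        have h2 : ⟪x - P x, Q u⟫ = ⟪x, Q u - P (Q u)⟫ := by
          rw [inner_sub_left, inner_sub_right]
          congr 1
          exact hPsymm x (Q u)
        have h3 : ⟪x, Q u - P (Q u)⟫ ≤ ‖x‖ * ‖Q u - P (Q u)‖ := real_inner_le_norm _ _
        have h4 : ‖Q u - P (Q u)‖ ≤ 2 * ε / g * ‖u‖ := side2 u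
        have h5 : ‖x‖ * ‖Q u - P (Q u)‖ ≤ ‖x‖ * (2 * ε / g * ‖u‖) :=
          mul_le_mul_of_nonneg_left h4 (norm_nonneg x)
        rw [h1, h2]
        calc ⟪x, Q u - P (Q u)⟫ ≤ ‖x‖ * (2 * ε / g * ‖u‖) := le_trans h3 h5
          _ = 2 * ε / g * ‖x‖ * ‖u‖ := by ring
      rcases eq_or_lt_of_le (norm_nonneg u) with h0 | h0
      · rw [← h0]
        positivity
      · have := (mul_le_mul_iff_of_pos_right h0).1 (by nlinarith : ‖u‖ * ‖u‖ ≤ (2 * ε / g * ‖x‖) * ‖u‖)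
        exact this
    refine ContinuousLinearMap.opNorm_le_bound _ (by positivity) fun x => ?_
    have hdecomp : (P - Q) x = (P x - Q (P x)) - (Q x - Q (P x)) := by
      rw [ContinuousLinearMap.sub_apply]; abel
    calc ‖(P - Q) x‖ ≤ ‖P x - Q (P x)‖ + ‖Q x - Q (P x)‖ := by
          rw [hdecomp]; exact norm_sub_le _ _
      _ ≤ 2 * ε / g * ‖x‖ + 2 * ε / g * ‖x‖ := add_le_add (side1 x) (side2' x)
      _ = (4 / g) * ε * ‖x‖ := by ring
      _ ≤ (4 / g) * ε * ‖x‖ := le_refl _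


end Spectral

section Birkhoff
variable {α : Type*} [MeasurableSpace α] {ν : Measure α} [IsProbabilityMeasure ν] {T : α → α}

variable {α : Type*} [MeasurableSpace α] {ν : Measure α} [IsProbabilityMeasure ν] {T : α → α}

/-- Running maximum of Birkhoff sums, `max_{0 ≤ k ≤ n} S_k` (with `S_0 = 0`). -/
noncomputable def maxS (T : α → α) (g : α → ℝ) : ℕ → α → ℝ
  | 0, _ => 0
  | (n+1), x => max (maxS T g n x) (birkhoffSum T g (n+1) x)

lemma maxS_nonneg (T : α → α) (g : α → ℝ) (n : ℕ) (x : α) : 0 ≤ maxS T g n x := by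
  induction n with
  | zero => simp [maxS]
  | succ n ih => exact le_trans ih (le_max_left _ _)

lemma maxS_mono (T : α → α) (g : α → ℝ) (n : ℕ) (x : α) :
    maxS T g n x ≤ maxS T g (n+1) x := le_max_left _ _

lemma birkhoffSum_le_maxS (T : α → α) (g : α → ℝ) {k n : ℕ} (hk : k ≤ n) (x : α) :
    birkhoffSum T g k x ≤ maxS T g n x := by
  induction n with
  | zero =>
    have : k = 0 := Nat.le_zero.1 hk
    simp [this, birkhoffSum_zero, maxS]
  | succ n ih =>
    rcases Nat.lt_or_ge k (n+1) with h | h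
    · exact le_trans (ih (Nat.lt_succ_iff.1 h)) (le_max_left _ _)
    · have : k = n + 1 := le_antisymm hk h
      subst this
      exact le_max_right _ _

lemma maxS_le_key (T : α → α) (g : α → ℝ) (n : ℕ) (x : α) :
    maxS T g (n+1) x ≤ max 0 (g x + maxS T g n (T x)) := by
  -- show every maxS m x with m ≤ n+1 is below the RHS
  suffices h : ∀ m, m ≤ n + 1 → maxS T g m x ≤ max 0 (g x + maxS T g n (T x)) from
    h (n+1) le_rfl
  intro m hm
  induction m with
  | zero => simp [maxS]
  | succ m ih =>
    rw [maxS]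
    refine max_le (ih (by omega)) ?_
    rw [birkhoffSum_succ']
    have h1 : birkhoffSum T g m (T x) ≤ maxS T g n (T x) :=
      birkhoffSum_le_maxS T g (by omega) (T x)
    refine le_trans ?_ (le_max_right _ _)
    linarith

lemma maxS_measurable (hTm : Measurable T) {g : α → ℝ} (hgm : Measurable g) (n : ℕ) :
    Measurable (maxS T g n) := by
  induction n with
  | zero => simpa [maxS] using measurable_const
  | succ n ih =>
    refine Measurable.max ih ?_
    refine Finset.measurable_sum _ fun i _ => ?_
    exact hgm.comp (hTm.iterate i)

lemma birkhoffSum_integrable (hT : MeasurePreserving T ν ν) {g : α → ℝ}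
    (hgi : Integrable g ν) (n : ℕ) : Integrable (birkhoffSum T g n) ν := by
  refine integrable_finset_sum _ fun i _ => ?_
  exact ((hT.iterate i).integrable_comp hgi.aestronglyMeasurable).2 hgi

lemma maxS_integrable (hT : MeasurePreserving T ν ν) {g : α → ℝ}
    (hgi : Integrable g ν) (n : ℕ) : Integrable (maxS T g n) ν := by
  induction n with
  | zero => simpa [maxS] using integrable_zero _ _ _
  | succ n ih =>
    have h2 := birkhoffSum_integrable hT hgi (n+1)
    have : maxS T g (n+1) = fun x => maxS T g n x ⊔ birkhoffSum T g (n+1) x := rfl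
    rw [this]
    exact ih.sup h2

/-- Garsia's maximal ergodic inequality. -/
lemma maximal_ergodic (hT : MeasurePreserving T ν ν) (hTm : Measurable T) {g : α → ℝ}
    (hgm : Measurable g) (hgi : Integrable g ν) (n : ℕ) :
    0 ≤ ∫ x in {x | 0 < maxS T g (n+1) x}, g x ∂ν := by
  set A := {x | 0 < maxS T g (n+1) x} with hA
  have hAm : MeasurableSet A := measurableSet_lt measurable_const (maxS_measurable hTm hgm (n+1))
  have hMn1 := maxS_integrable hT hgi (n+1)
  have hMnT : Integrable (fun x => maxS T g n (T x)) ν :=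
    (hT.integrable_comp (maxS_integrable hT hgi n).aestronglyMeasurable).2
      (maxS_integrable hT hgi n)
  -- pointwise inequality on A
  have hptA : ∀ x ∈ A, maxS T g (n+1) x - maxS T g n (T x) ≤ g x := by
    intro x hx
    have h1 := maxS_le_key T g n x
    have h2 : (0:ℝ) < maxS T g (n+1) x := hx
    rcases max_cases (0:ℝ) (g x + maxS T g n (T x)) with ⟨he, _⟩ | ⟨he, _⟩
    · rw [he] at h1; linarith
    · rw [he] at h1; linarith
  -- ∫_A maxS (n+1) = ∫ maxS (n+1)
  have hint1 : ∫ x in A, maxS T g (n+1) x ∂ν = ∫ x, maxS T g (n+1) x ∂ν := by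
    rw [← integral_indicator hAm]
    refine integral_congr_ae (Eventually.of_forall fun x => ?_)
    by_cases hx : x ∈ A
    · simp [Set.indicator_of_mem hx]
    · have h0 : maxS T g (n+1) x = 0 := by
        have h1 := maxS_nonneg T g (n+1) x
        have h2 : ¬ (0 < maxS T g (n+1) x) := hx
        push_neg at h2
        linarith
      simp [Set.indicator_of_notMem hx, h0]
  have hint2 : ∫ x in A, maxS T g n (T x) ∂ν ≤ ∫ x, maxS T g n (T x) ∂ν := by
    refine setIntegral_le_integral hMnT (Eventually.of_forall fun x => ?_)
    exact maxS_nonneg T g n (T x)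
  have hint3 : ∫ x, maxS T g n (T x) ∂ν = ∫ x, maxS T g n x ∂ν := by
    have := integral_map (μ := ν) hTm.aemeasurable
      (f := maxS T g n) (by rw [hT.map_eq]; exact (maxS_integrable hT hgi n).aestronglyMeasurable)
    rw [hT.map_eq] at this
    exact this.symm
  have hint4 : ∫ x, maxS T g n x ∂ν ≤ ∫ x, maxS T g (n+1) x ∂ν :=
    integral_mono (maxS_integrable hT hgi n) hMn1 (fun x => maxS_mono T g n x)
  have hstep : ∫ x in A, (maxS T g (n+1) x - maxS T g n (T x)) ∂ν ≤ ∫ x in A, g x ∂ν := by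
    refine setIntegral_mono_on (hMn1.sub hMnT).integrableOn hgi.integrableOn hAm ?_
    exact hptA
  have hsub : ∫ x in A, (maxS T g (n+1) x - maxS T g n (T x)) ∂ν
      = ∫ x in A, maxS T g (n+1) x ∂ν - ∫ x in A, maxS T g n (T x) ∂ν :=
    integral_sub hMn1.integrableOn hMnT.integrableOn
  have : 0 ≤ ∫ x in A, (maxS T g (n+1) x - maxS T g n (T x)) ∂ν := by
    rw [hsub, hint1]
    linarith
  linarith

/-- If the maximal function is a.e. eventually positive, the integral is nonnegative. -/
lemma integral_nonneg_of_maxS (hT : MeasurePreserving T ν ν) (hTm : Measurable T) {g : α → ℝ}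
    (hgm : Measurable g) (hgi : Integrable g ν)
    (hae : ∀ᵐ x ∂ν, ∃ n, 0 < maxS T g n x) : 0 ≤ ∫ x, g x ∂ν := by
  set A : ℕ → Set α := fun n => {x | 0 < maxS T g n x} with hA
  have hAm : ∀ n, MeasurableSet (A n) := fun n =>
    measurableSet_lt measurable_const (maxS_measurable hTm hgm n)
  have hmono : ∀ n, A n ⊆ A (n+1) := fun n x hx => lt_of_lt_of_le hx (maxS_mono T g n x)
  -- dominated convergence for the indicators
  have htend : Tendsto (fun n => ∫ x, (A n).indicator g x ∂ν) atTop (𝓝 (∫ x, g x ∂ν)) := by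
    refine tendsto_integral_of_dominated_convergence (fun x => |g x|) ?_ ?_ ?_ ?_
    · intro n
      exact ((hgm.indicator (hAm n)).aestronglyMeasurable)
    · exact hgi.abs
    · intro n
      refine Eventually.of_forall fun x => ?_
      by_cases hx : x ∈ A n
      · simp [Set.indicator_of_mem hx, Real.norm_eq_abs, le_abs_self, abs_le_abs]
      · simp [Set.indicator_of_notMem hx, abs_nonneg]
    · refine hae.mono fun x ⟨n, hn⟩ => ?_
      have hev : ∀ᶠ m in atTop, (A m).indicator g x = g x := by
        refine eventually_atTop.2 ⟨n, fun m hm => ?_⟩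
        have hxm : x ∈ A m := by
          have : ∀ k, x ∈ A n → x ∈ A (n + k) := by
            intro k hk
            induction k with
            | zero => simpa using hk
            | succ k ih => exact hmono _ ih
          have h2 := this (m - n) hn
          rwa [Nat.add_sub_cancel' hm] at h2
        simp [Set.indicator_of_mem hxm]
      exact Tendsto.congr' (hev.mono fun m hm => hm.symm) tendsto_const_nhds
  -- each term is nonnegative
  have hnn : ∀ n, 0 ≤ ∫ x, (A n).indicator g x ∂ν := by
    intro n
    cases n with
    | zero =>
      have : A 0 = ∅ := by
        ext x; simp [hA, maxS]
      simp [this]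
    | succ n =>
      rw [integral_indicator (hAm (n+1))]
      exact maximal_ergodic hT hTm hgm hgi n
  exact le_of_tendsto_of_tendsto tendsto_const_nhds htend
    (Eventually.of_forall fun n => hnn n)

lemma birkhoffAverage_measurable (hTm : Measurable T) {f : α → ℝ} (hfm : Measurable f) (n : ℕ) :
    Measurable (birkhoffAverage ℝ T f n) := by
  have h : Measurable (fun x => birkhoffSum T f n x) :=
    Finset.measurable_sum _ fun i _ => hfm.comp (hTm.iterate i)
  have h2 : (fun x => birkhoffAverage ℝ T f n x) = fun x => (n:ℝ)⁻¹ * birkhoffSum T f n x := by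
    funext x; rw [birkhoffAverage, smul_eq_mul]
  have h3 : Measurable (fun x => (n:ℝ)⁻¹ * birkhoffSum T f n x) := h.const_mul _
  rw [show (birkhoffAverage ℝ T f n) = fun x => (n:ℝ)⁻¹ * birkhoffSum T f n x from h2]
  exact h3

/-- The set where the Birkhoff averages exceed `c` frequently. -/
def freqSet (T : α → α) (f : α → ℝ) (c : ℝ) : Set α :=
  {x | ∃ᶠ n in atTop, c < birkhoffAverage ℝ T f n x}

/-- The set where the Birkhoff averages frequently exceed some rational above `c`. -/
def freqSetQ (T : α → α) (f : α → ℝ) (c : ℝ) : Set α :=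
  ⋃ (q : ℚ) (_ : c < (q : ℝ)), freqSet T f (q : ℝ)

lemma freqSet_measurable (hTm : Measurable T) {f : α → ℝ} (hfm : Measurable f) (c : ℝ) :
    MeasurableSet (freqSet T f c) := by
  have h : freqSet T f c
      = ⋂ N : ℕ, ⋃ n : ℕ, ⋃ (_ : N ≤ n), {x | c < birkhoffAverage ℝ T f n x} := by
    ext x
    simp only [freqSet, Set.mem_setOf_eq, frequently_atTop, Set.mem_iInter, Set.mem_iUnion]
    constructor
    · intro h N; obtain ⟨n, hn, hc⟩ := h N; exact ⟨n, hn, hc⟩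
    · intro h N; obtain ⟨n, hn, hc⟩ := h N; exact ⟨n, hn, hc⟩
  rw [h]
  exact MeasurableSet.iInter fun N => MeasurableSet.iUnion fun n => MeasurableSet.iUnion fun _ =>
    measurableSet_lt measurable_const (birkhoffAverage_measurable hTm hfm n)

lemma freqSetQ_measurable (hTm : Measurable T) {f : α → ℝ} (hfm : Measurable f) (c : ℝ) :
    MeasurableSet (freqSetQ T f c) :=
  MeasurableSet.iUnion fun q => MeasurableSet.iUnion fun _ => freqSet_measurable hTm hfm _

lemma freq_step_A {f : α → ℝ} {c1 c2 : ℝ} (h12 : c1 < c2) (x : α)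
    (h : ∃ᶠ n in atTop, c2 < birkhoffAverage ℝ T f n (T x)) :
    ∃ᶠ n in atTop, c1 < birkhoffAverage ℝ T f n x := by
  rw [frequently_atTop] at h ⊢
  intro N
  obtain ⟨n0, hn0⟩ := exists_nat_ge ((c1 - f x) / (c2 - c1))
  obtain ⟨n, hn, hc⟩ := h (max (max N n0) 1)
  have hn1 : 1 ≤ n := le_trans (le_max_right _ _) hn
  have hnN : N ≤ n := le_trans (le_trans (le_max_left N n0) (le_max_left _ _)) hn
  have hnn0 : n0 ≤ n := le_trans (le_trans (le_max_right N n0) (le_max_left _ _)) hn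
  have hpos : (0:ℝ) < (n : ℝ) := by exact_mod_cast hn1
  have hSn : (n:ℝ) * c2 < birkhoffSum T f n (T x) := by
    rw [birkhoffAverage, smul_eq_mul] at hc
    have h2 := mul_lt_mul_of_pos_left hc hpos
    rwa [← mul_assoc, mul_inv_cancel₀ (ne_of_gt hpos), one_mul] at h2
  have hkey : ((n:ℝ) + 1) * c1 ≤ f x + (n:ℝ) * c2 := by
    have h1 : ((c1 - f x) / (c2 - c1)) ≤ (n:ℝ) := le_trans hn0 (by exact_mod_cast hnn0)
    have h2 : c1 - f x ≤ (n:ℝ) * (c2 - c1) := by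
      rw [div_le_iff₀ (by linarith)] at h1
      linarith
    nlinarith
  have hS1 : ((n:ℝ) + 1) * c1 < birkhoffSum T f (n+1) x := by
    rw [birkhoffSum_succ']
    linarith
  refine ⟨n + 1, by omega, ?_⟩
  rw [birkhoffAverage, smul_eq_mul]
  have hpos1 : (0:ℝ) < ((n:ℝ) + 1) := by linarith
  have h3 := mul_lt_mul_of_pos_left hS1 (inv_pos.2 hpos1)
  rw [← mul_assoc, inv_mul_cancel₀ (ne_of_gt hpos1), one_mul] at h3
  have hcast : ((n + 1 : ℕ) : ℝ) = (n:ℝ) + 1 := by push_cast; ring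
  rw [hcast]
  exact h3

lemma freq_step_B {f : α → ℝ} {c1 c2 : ℝ} (h12 : c1 < c2) (x : α)
    (h : ∃ᶠ n in atTop, c2 < birkhoffAverage ℝ T f n x) :
    ∃ᶠ n in atTop, c1 < birkhoffAverage ℝ T f n (T x) := by
  rw [frequently_atTop] at h ⊢
  intro N
  obtain ⟨n0, hn0⟩ := exists_nat_ge ((f x - c2) / (c2 - c1))
  obtain ⟨n, hn, hc⟩ := h (max (max (N+1) (n0+1)) 2)
  obtain ⟨m, rfl⟩ : ∃ m, n = m + 1 := by
    have : 1 ≤ n := le_trans (by omega) hn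
    exact ⟨n - 1, by omega⟩
  have hm1 : 1 ≤ m := by
    have : 2 ≤ m + 1 := le_trans (le_max_right _ _) hn
    omega
  have hmN : N ≤ m := by
    have : N + 1 ≤ m + 1 := le_trans (le_trans (le_max_left _ _) (le_max_left _ _)) hn
    omega
  have hmn0 : n0 ≤ m := by
    have : n0 + 1 ≤ m + 1 := le_trans (le_trans (le_max_right _ _) (le_max_left _ _)) hn
    omega
  have hpos : (0:ℝ) < ((m:ℝ) + 1) := by positivity
  have hmpos : (0:ℝ) < (m:ℝ) := by exact_mod_cast hm1
  have hSn : ((m:ℝ) + 1) * c2 < birkhoffSum T f (m+1) x := by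
    rw [birkhoffAverage, smul_eq_mul] at hc
    have hcast : ((m + 1 : ℕ) : ℝ) = (m:ℝ) + 1 := by push_cast; ring
    rw [hcast] at hc
    have h2 := mul_lt_mul_of_pos_left hc hpos
    rwa [← mul_assoc, mul_inv_cancel₀ (ne_of_gt hpos), one_mul] at h2
  have hS : birkhoffSum T f (m+1) x = f x + birkhoffSum T f m (T x) := birkhoffSum_succ' T f m x
  have hkey : (m:ℝ) * c1 ≤ ((m:ℝ) + 1) * c2 - f x := by
    have h1 : ((f x - c2) / (c2 - c1)) ≤ (m:ℝ) := le_trans hn0 (by exact_mod_cast hmn0)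
    have h2 : f x - c2 ≤ (m:ℝ) * (c2 - c1) := by
      rw [div_le_iff₀ (by linarith)] at h1
      linarith
    nlinarith
  have hSm : (m:ℝ) * c1 < birkhoffSum T f m (T x) := by
    rw [hS] at hSn
    linarith
  refine ⟨m, hmN, ?_⟩
  rw [birkhoffAverage, smul_eq_mul]
  have h3 := mul_lt_mul_of_pos_left hSm (inv_pos.2 hmpos)
  rwa [← mul_assoc, inv_mul_cancel₀ (ne_of_gt hmpos), one_mul] at h3

lemma freqSetQ_invariant (f : α → ℝ) (c : ℝ) :
    T ⁻¹' (freqSetQ T f c) = freqSetQ T f c := by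
  ext x
  simp only [freqSetQ, Set.mem_preimage, Set.mem_iUnion, freqSet, Set.mem_setOf_eq]
  constructor
  · rintro ⟨q, hq, hfreq⟩
    obtain ⟨q', hq1, hq2⟩ := exists_rat_btwn (show c < (q:ℝ) from hq)
    exact ⟨q', hq1, freq_step_A hq2 x hfreq⟩
  · rintro ⟨q, hq, hfreq⟩
    obtain ⟨q', hq1, hq2⟩ := exists_rat_btwn (show c < (q:ℝ) from hq)
    exact ⟨q', hq1, freq_step_B hq2 x hfreq⟩

lemma birkhoffSum_sub_const (T : α → α) (f : α → ℝ) (b : ℝ) (n : ℕ) (x : α) :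
    birkhoffSum T (fun y => f y - b) n x = birkhoffSum T f n x - n * b := by
  unfold birkhoffSum
  rw [Finset.sum_sub_distrib, Finset.sum_const, Finset.card_range]
  simp [nsmul_eq_mul]

/-- Key step: the "frequently above a level strictly bigger than the mean" set is null. -/
lemma freqSetQ_null (hT : Ergodic T ν) {f : α → ℝ} (hfm : Measurable f)
    (hfi : Integrable f ν) {b : ℝ} (hb : ∫ x, f x ∂ν < b) :
    ν (freqSetQ T f b) = 0 := by
  have hTm : Measurable T := hT.toMeasurePreserving.measurable
  have hmeas := freqSetQ_measurable (T := T) hTm hfm b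
  rcases hT.ae_empty_or_univ hmeas (freqSetQ_invariant f b) with hc | hc
  · exact ae_eq_empty.1 hc
  · exfalso
    set g : α → ℝ := fun y => f y - b with hg
    have hgm : Measurable g := hfm.sub measurable_const
    have hgi : Integrable g ν := hfi.sub (integrable_const b)
    have hmem : ∀ᵐ x ∂ν, x ∈ freqSetQ T f b := by
      have h0 : ν (freqSetQ T f b)ᶜ = 0 := by
        rw [MeasureTheory.ae_eq_univ] at hc
        exact hc
      rw [ae_iff]
      convert h0 using 2
      rfl
    have hae : ∀ᵐ x ∂ν, ∃ n, 0 < maxS T g n x := by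
      refine hmem.mono fun x hx => ?_
      simp only [freqSetQ, Set.mem_iUnion, freqSet, Set.mem_setOf_eq] at hx
      obtain ⟨q, hq, hfreq⟩ := hx
      obtain ⟨n, hn1, hcn⟩ := frequently_atTop.1 hfreq 1
      have hpos : (0:ℝ) < (n:ℝ) := by exact_mod_cast hn1
      have hSn : (n:ℝ) * (q:ℝ) < birkhoffSum T f n x := by
        rw [birkhoffAverage, smul_eq_mul] at hcn
        have h2 := mul_lt_mul_of_pos_left hcn hpos
        rwa [← mul_assoc, mul_inv_cancel₀ (ne_of_gt hpos), one_mul] at h2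
      have hSg : 0 < birkhoffSum T g n x := by
        rw [hg, birkhoffSum_sub_const]
        have : (n:ℝ) * b < (n:ℝ) * (q:ℝ) := by
          exact mul_lt_mul_of_pos_left hq hpos
        linarith
      exact ⟨n, lt_of_lt_of_le hSg (birkhoffSum_le_maxS T g le_rfl x)⟩
    have h1 := integral_nonneg_of_maxS hT.toMeasurePreserving hTm hgm hgi hae
    have h2 : ∫ x, g x ∂ν = (∫ x, f x ∂ν) - b := by
      rw [hg, integral_sub hfi (integrable_const b), integral_const]
      simp
    rw [h2] at h1
    linarith

/-- Birkhoff's pointwise ergodic theorem, measurable version. -/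
lemma birkhoff_scalar_meas (hT : Ergodic T ν) {f : α → ℝ} (hfm : Measurable f)
    (hfi : Integrable f ν) :
    ∀ᵐ x ∂ν, Tendsto (fun n => birkhoffAverage ℝ T f n x) atTop (𝓝 (∫ x, f x ∂ν)) := by
  set I := ∫ x, f x ∂ν with hI
  -- upper bounds
  have hup : ∀ᵐ x ∂ν, ∀ q : ℚ, I < (q:ℝ) → ∀ᶠ n in atTop, birkhoffAverage ℝ T f n x ≤ (q:ℝ) := by
    rw [ae_all_iff]
    intro q
    by_cases hq : I < (q:ℝ)
    · have hnull := freqSetQ_null hT hfm hfi (b := (I + q)/2) (by linarith)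
      have := (measure_eq_zero_iff_ae_notMem.1 hnull)
      refine this.mono fun x hx _ => ?_
      by_contra hcon
      apply hx
      simp only [freqSetQ, Set.mem_iUnion, freqSet, Set.mem_setOf_eq]
      refine ⟨q, by linarith, ?_⟩
      rw [not_eventually] at hcon
      exact hcon.mono fun n hn => lt_of_not_ge hn
    · exact Eventually.of_forall fun x hq2 => absurd hq2 hq
  -- lower bounds via -f
  have hlowraw : ∀ᵐ x ∂ν, ∀ q : ℚ, (∫ x, (fun y => -f y) x ∂ν) < (q:ℝ) →
      ∀ᶠ n in atTop, birkhoffAverage ℝ T (fun y => -f y) n x ≤ (q:ℝ) := by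
    rw [ae_all_iff]
    intro q
    by_cases hq : (∫ x, (fun y => -f y) x ∂ν) < (q:ℝ)
    · have hnull := freqSetQ_null hT hfm.neg hfi.neg (b := ((∫ x, (fun y => -f y) x ∂ν) + q)/2)
        (by have : ∫ x, (-f) x ∂ν = ∫ x, (fun y => -f y) x ∂ν := rfl; linarith)
      have := (measure_eq_zero_iff_ae_notMem.1 hnull)
      refine this.mono fun x hx _ => ?_
      by_contra hcon
      apply hx
      simp only [freqSetQ, Set.mem_iUnion, freqSet, Set.mem_setOf_eq]
      refine ⟨q, by linarith, ?_⟩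
      rw [not_eventually] at hcon
      exact hcon.mono fun n hn => lt_of_not_ge hn
    · exact Eventually.of_forall fun x hq2 => absurd hq2 hq
  filter_upwards [hup, hlowraw] with x hx1 hx2
  rw [hI]
  refine tendsto_order.2 ⟨?_, ?_⟩
  · -- lower bound
    intro a ha
    obtain ⟨q, hq1, hq2⟩ := exists_rat_btwn (show -I < -a by linarith)
    have hIneg : ∫ x, (fun y => -f y) x ∂ν = -I := by
      rw [hI]
      exact integral_neg f
    have h3 := hx2 q (by rw [hIneg]; exact hq1)
    refine h3.mono fun n hn => ?_
    have havg : birkhoffAverage ℝ T (fun y => -f y) n x = - birkhoffAverage ℝ T f n x := by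
      unfold birkhoffAverage birkhoffSum
      simp [Finset.sum_neg_distrib]
    rw [havg] at hn
    have : -(q:ℝ) ≤ birkhoffAverage ℝ T f n x := by linarith
    linarith
  · intro a ha
    obtain ⟨q, hq1, hq2⟩ := exists_rat_btwn ha
    have h3 := hx1 q hq1
    refine h3.mono fun n hn => ?_
    linarith

/-- Birkhoff's pointwise ergodic theorem for integrable functions. -/
lemma birkhoff_scalar (hT : Ergodic T ν) {f : α → ℝ} (hfi : Integrable f ν) :
    ∀ᵐ x ∂ν, Tendsto (fun n => birkhoffAverage ℝ T f n x) atTop (𝓝 (∫ x, f x ∂ν)) := by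
  have hTm : Measurable T := hT.toMeasurePreserving.measurable
  set f' := hfi.aestronglyMeasurable.mk f with hf'
  have hf'm : Measurable f' := hfi.aestronglyMeasurable.stronglyMeasurable_mk.measurable
  have heq : f =ᵐ[ν] f' := hfi.aestronglyMeasurable.ae_eq_mk
  have hf'i : Integrable f' ν := hfi.congr heq
  have hcomp : ∀ i : ℕ, ∀ᵐ x ∂ν, f (T^[i] x) = f' (T^[i] x) := by
    intro i
    have hq : Measure.QuasiMeasurePreserving (T^[i]) ν ν :=
      (hT.toMeasurePreserving.iterate i).quasiMeasurePreserving
    exact hq.tendsto_ae.eventually heq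
  have hall : ∀ᵐ x ∂ν, ∀ i : ℕ, f (T^[i] x) = f' (T^[i] x) := ae_all_iff.2 hcomp
  have hmain := birkhoff_scalar_meas hT hf'm hf'i
  filter_upwards [hall, hmain] with x hx hx2
  have havg : ∀ n, birkhoffAverage ℝ T f n x = birkhoffAverage ℝ T f' n x := by
    intro n
    unfold birkhoffAverage birkhoffSum
    congr 1
    exact Finset.sum_congr rfl fun i _ => hx i
  rw [integral_congr_ae heq]
  exact (Tendsto.congr (fun n => (havg n).symm)) hx2


variable {V : Type*} [NormedAddCommGroup V] [NormedSpace ℝ V] [CompleteSpace V]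

lemma birkhoffAverage_smul_const (T : α → α) (h : α → ℝ) (c : V) (n : ℕ) (x : α) :
    birkhoffAverage ℝ T (fun y => h y • c) n x = (birkhoffAverage ℝ T h n x) • c := by
  unfold birkhoffAverage birkhoffSum
  rw [← Finset.sum_smul, smul_assoc]

lemma birkhoffAverage_add_fun (T : α → α) (F G : α → V) (n : ℕ) (x : α) :
    birkhoffAverage ℝ T (F + G) n x
      = birkhoffAverage ℝ T F n x + birkhoffAverage ℝ T G n x := by
  unfold birkhoffAverage birkhoffSum
  rw [← smul_add, ← Finset.sum_add_distrib]
  rfl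

lemma birkhoffAverage_norm_sub_le (T : α → α) (F G : α → V) (n : ℕ) (x : α) :
    ‖birkhoffAverage ℝ T F n x - birkhoffAverage ℝ T G n x‖
      ≤ birkhoffAverage ℝ T (fun a => ‖F a - G a‖) n x := by
  unfold birkhoffAverage birkhoffSum
  rw [← smul_sub, ← Finset.sum_sub_distrib]
  rw [norm_smul, smul_eq_mul]
  have h1 : ‖∑ k ∈ Finset.range n, (F (T^[k] x) - G (T^[k] x))‖
      ≤ ∑ k ∈ Finset.range n, ‖F (T^[k] x) - G (T^[k] x)‖ := norm_sum_le _ _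
  have h2 : (0:ℝ) ≤ ‖((n:ℝ))⁻¹‖ := norm_nonneg _
  have h3 : ‖((n:ℝ))⁻¹‖ = (n:ℝ)⁻¹ := by
    rw [Real.norm_eq_abs, abs_of_nonneg (by positivity)]
  rw [h3]
  exact mul_le_mul_of_nonneg_left h1 (by positivity)

/-- Birkhoff's pointwise ergodic theorem for Banach-space-valued functions. -/
lemma birkhoff_banach (hT : Ergodic T ν) {F : α → V} (hFi : Integrable F ν) :
    ∀ᵐ x ∂ν, Tendsto (fun n => birkhoffAverage ℝ T F n x) atTop (𝓝 (∫ x, F x ∂ν)) := by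
  set P : (α → V) → Prop := fun F =>
    ∀ᵐ x ∂ν, Tendsto (fun n => birkhoffAverage ℝ T F n x) atTop (𝓝 (∫ x, F x ∂ν)) with hP
  have hmain : ∀ ⦃F : α → V⦄, Integrable F ν → P F := by
    refine Integrable.induction P ?_ ?_ ?_ ?_
    · -- indicators
      intro c s hs hμs
      have hind : s.indicator (fun _ => c) = fun y => (s.indicator (fun _ => (1:ℝ)) y) • c := by
        funext y
        by_cases hy : y ∈ s <;> simp [hy]
      have hhi : Integrable (s.indicator fun _ => (1:ℝ)) ν :=
        (integrable_const (1:ℝ)).indicator hs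
      have hsc := birkhoff_scalar hT hhi
      rw [hP, hind]
      refine hsc.mono fun x hx => ?_
      have h1 : Tendsto (fun n => (birkhoffAverage ℝ T (s.indicator fun _ => (1:ℝ)) n x) • c)
          atTop (𝓝 ((∫ y, s.indicator (fun _ => (1:ℝ)) y ∂ν) • c)) := hx.smul_const c
      have h2 : ∫ y, (s.indicator (fun _ => (1:ℝ)) y) • c ∂ν
          = (∫ y, s.indicator (fun _ => (1:ℝ)) y ∂ν) • c := integral_smul_const _ c
      rw [h2]
      exact h1.congr fun n => (birkhoffAverage_smul_const T _ c n x).symm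
    · -- addition
      intro F G _ hFi hGi hPF hPG
      rw [hP]
      filter_upwards [hPF, hPG] with x hx1 hx2
      have h1 := hx1.add hx2
      rw [← integral_add hFi hGi] at h1
      exact h1.congr fun n => (birkhoffAverage_add_fun T F G n x).symm
    · -- closedness in L¹
      refine IsSeqClosed.isClosed ?_
      intro F' G hF' hFG
      have hδ : Tendsto (fun k => ∫ a, ‖(F' k : α → V) a - (G : α → V) a‖ ∂ν) atTop (𝓝 0) := by
        have h1 : ∀ k, ∫ a, ‖(F' k : α → V) a - (G : α → V) a‖ ∂ν = dist (F' k) G := by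
          intro k
          rw [dist_eq_norm, L1.norm_eq_integral_norm]
          refine integral_congr_ae ?_
          filter_upwards [Lp.coeFn_sub (F' k) G] with a ha
          rw [ha]
          rfl
        simp only [h1]
        exact tendsto_iff_dist_tendsto_zero.1 hFG
      have hsc : ∀ k : ℕ, ∀ᵐ x ∂ν,
          Tendsto (fun n => birkhoffAverage ℝ T (fun a => ‖(F' k : α → V) a - (G : α → V) a‖) n x)
            atTop (𝓝 (∫ a, ‖(F' k : α → V) a - (G : α → V) a‖ ∂ν)) := by
        intro k
        exact birkhoff_scalar hT (((L1.integrable_coeFn (F' k)).sub (L1.integrable_coeFn G)).norm)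
      have hall : ∀ᵐ x ∂ν, (∀ k : ℕ,
          Tendsto (fun n => birkhoffAverage ℝ T (fun a => ‖(F' k : α → V) a - (G : α → V) a‖) n x)
            atTop (𝓝 (∫ a, ‖(F' k : α → V) a - (G : α → V) a‖ ∂ν)))
          ∧ ∀ k : ℕ, Tendsto (fun n => birkhoffAverage ℝ T (F' k : α → V) n x) atTop
              (𝓝 (∫ a, (F' k : α → V) a ∂ν)) := by
        refine (ae_all_iff.2 hsc).and (ae_all_iff.2 fun k => hF' k)
      rw [Set.mem_setOf_eq, hP]
      refine hall.mono fun x ⟨hx1, hx2⟩ => ?_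
      rw [Metric.tendsto_atTop]
      intro ε hε
      -- choose k with small L¹ distance
      obtain ⟨k, hk⟩ : ∃ k, ∫ a, ‖(F' k : α → V) a - (G : α → V) a‖ ∂ν < ε / 6 := by
        obtain ⟨K, hK⟩ := Metric.tendsto_atTop.1 hδ (ε/6) (by linarith)
        have hk := hK K le_rfl
        set k := K
        refine ⟨k, ?_⟩
        have h2 : |∫ a, ‖(F' k : α → V) a - (G : α → V) a‖ ∂ν - 0| < ε/6 := by
          simpa [Real.dist_eq] using hk
        have h3 : (0:ℝ) ≤ ∫ a, ‖(F' k : α → V) a - (G : α → V) a‖ ∂ν :=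
          integral_nonneg fun a => norm_nonneg _
        rw [sub_zero, abs_of_nonneg h3] at h2
        exact h2
      set δ := ∫ a, ‖(F' k : α → V) a - (G : α → V) a‖ ∂ν with hδdef
      have hδ0 : 0 ≤ δ := integral_nonneg fun a => norm_nonneg _
      have hIdist : ‖(∫ a, (F' k : α → V) a ∂ν) - ∫ a, (G : α → V) a ∂ν‖ ≤ δ := by
        rw [← integral_sub (L1.integrable_coeFn (F' k)) (L1.integrable_coeFn G)]
        exact norm_integral_le_integral_norm _
      have hev1 := (Metric.tendsto_atTop.1 (hx1 k) (ε/6) (by linarith))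
      have hev2 := (Metric.tendsto_atTop.1 (hx2 k) (ε/6) (by linarith))
      obtain ⟨N1, hN1⟩ := hev1
      obtain ⟨N2, hN2⟩ := hev2
      refine ⟨max N1 N2, fun n hn => ?_⟩
      have hn1 : N1 ≤ n := le_trans (le_max_left _ _) hn
      have hn2 : N2 ≤ n := le_trans (le_max_right _ _) hn
      have h1 : birkhoffAverage ℝ T (fun a => ‖(F' k : α → V) a - (G : α → V) a‖) n x
          < δ + ε/6 := by
        have := hN1 n hn1
        rw [Real.dist_eq] at this
        have h2 := abs_lt.1 this
        linarith [h2.2]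
      have h2 : ‖birkhoffAverage ℝ T (F' k : α → V) n x - ∫ a, (F' k : α → V) a ∂ν‖ < ε/6 := by
        have := hN2 n hn2
        rwa [dist_eq_norm] at this
      have h3 : ‖birkhoffAverage ℝ T (G : α → V) n x - birkhoffAverage ℝ T (F' k : α → V) n x‖
          ≤ birkhoffAverage ℝ T (fun a => ‖(F' k : α → V) a - (G : α → V) a‖) n x := by
        have := birkhoffAverage_norm_sub_le T (G : α → V) (F' k : α → V) n x
        refine le_trans this ?_
        have heq : (fun a => ‖(G : α → V) a - (F' k : α → V) a‖)
            = fun a => ‖(F' k : α → V) a - (G : α → V) a‖ := by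
          funext a; rw [norm_sub_rev]
        rw [heq]
      rw [dist_eq_norm]
      calc ‖birkhoffAverage ℝ T (G : α → V) n x - ∫ a, (G : α → V) a ∂ν‖
          ≤ ‖birkhoffAverage ℝ T (G : α → V) n x - birkhoffAverage ℝ T (F' k : α → V) n x‖
            + ‖birkhoffAverage ℝ T (F' k : α → V) n x - ∫ a, (F' k : α → V) a ∂ν‖
            + ‖(∫ a, (F' k : α → V) a ∂ν) - ∫ a, (G : α → V) a ∂ν‖ := by
            have := norm_sub_le_norm_sub_add_norm_sub
              (birkhoffAverage ℝ T (G : α → V) n x)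
              (birkhoffAverage ℝ T (F' k : α → V) n x) (∫ a, (G : α → V) a ∂ν)
            calc ‖birkhoffAverage ℝ T (G : α → V) n x - ∫ a, (G : α → V) a ∂ν‖
                ≤ ‖birkhoffAverage ℝ T (G : α → V) n x - birkhoffAverage ℝ T (F' k : α → V) n x‖
                  + ‖birkhoffAverage ℝ T (F' k : α → V) n x - ∫ a, (G : α → V) a ∂ν‖ := this
              _ ≤ _ := by
                  have h4 := norm_sub_le_norm_sub_add_norm_sub
                    (birkhoffAverage ℝ T (F' k : α → V) n x)
                    (∫ a, (F' k : α → V) a ∂ν) (∫ a, (G : α → V) a ∂ν)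
                  linarith
        _ < (δ + ε/6) + ε/6 + δ := by linarith [le_trans h3 (le_of_lt h1)]
        _ < ε := by linarith
    · -- a.e. invariance
      intro F G heq hFi hPF
      rw [hP]
      have hcomp : ∀ i : ℕ, ∀ᵐ x ∂ν, F (T^[i] x) = G (T^[i] x) := by
        intro i
        exact ((hT.toMeasurePreserving.iterate i).quasiMeasurePreserving).tendsto_ae.eventually heq
      have hall : ∀ᵐ x ∂ν, ∀ i : ℕ, F (T^[i] x) = G (T^[i] x) := ae_all_iff.2 hcomp
      filter_upwards [hall, hPF] with x hx hx2
      have havg : ∀ n, birkhoffAverage ℝ T F n x = birkhoffAverage ℝ T G n x := by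
        intro n
        unfold birkhoffAverage birkhoffSum
        congr 1
        exact Finset.sum_congr rfl fun i _ => hx i
      rw [← integral_congr_ae heq]
      exact (Tendsto.congr havg) hx2
  exact hmain hFi


end Birkhoff

theorem kernel_pca_spectral_consistency
    {Ω : Type*} [MeasurableSpace Ω] (P : Measure Ω) [IsProbabilityMeasure P]
    {E : Type*} [TopologicalSpace E] [PolishSpace E] [MeasurableSpace E] [BorelSpace E]
    {H : Type*} [NormedAddCommGroup H] [InnerProductSpace ℝ H] [CompleteSpace H]
      [SecondCountableTopology H] [MeasurableSpace H] [BorelSpace H]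
    -- the stationary process
    (X : ℤ → Ω → E) (hXm : ∀ t, Measurable (X t))
    (hstat : ∀ (r : ℕ) (t : Fin r → ℤ) (s : ℤ),
      Measure.map (fun ω => fun i => X (t i) ω) P
        = Measure.map (fun ω => fun i => X (t i + s) ω) P)
    -- ergodicity: the left shift on the canonical space E^ℤ carrying the law
    -- of the process is an ergodic measure-preserving transformation
    (hergodic : Ergodic (fun f : ℤ → E => fun t => f (t + 1))
      (Measure.map (fun ω => fun t => X t ω) P))
    -- feature map, square integrability, centering
    (φ : E → H) (hφ : Measurable φ)
    (hL2 : MemLp (fun ω => φ (X 0 ω)) 2 P)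
    (hcent : ∫ ω, φ (X 0 ω) ∂P = 0)
    -- eigenvalues of C = C(0), ordered nonincreasingly with multiplicities,
    -- encoded by an orthonormal eigenbasis
    (lamC : ℕ → ℝ) (eC : ℕ → H)
    (heC : Orthonormal ℝ eC)
    (hspanC : Dense (Submodule.span ℝ (Set.range eC) : Set H))
    (hdiagC : ∀ i, CovOp P X φ (eC i) = lamC i • eC i)
    (hmonoC : Antitone lamC)
    -- eigenvalues of the empirical operators C_n, ordered nonincreasingly,
    -- encoded by (random) orthonormal eigenbases
    (lamN : ℕ → Ω → ℕ → ℝ) (eN : ℕ → Ω → ℕ → H)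
    (heN : ∀ n ω, Orthonormal ℝ (eN n ω))
    (hspanN : ∀ n ω, Dense (Submodule.span ℝ (Set.range (eN n ω)) : Set H))
    (hdiagN : ∀ n ω i, CovEmp X φ n ω (eN n ω i) = lamN n ω i • eN n ω i)
    (hmonoN : ∀ n ω, Antitone (lamN n ω))
    -- a distinct (nonzero) eigenvalue μ of C with index cluster Δ and spectral
    -- gap lower bound g
    (μ : ℝ) (hμne : μ ≠ 0) (hμeig : ∃ i, lamC i = μ)
    (Δ : Finset ℕ) (hΔ : ∀ i, i ∈ Δ ↔ lamC i = μ)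
    (g : ℝ) (hg : 0 < g) (hgap : ∀ i, lamC i ≠ μ → g ≤ |lamC i - μ|) :
    ∀ᵐ ω ∂P,
      -- (i) uniform convergence of the eigenvalues
      Tendsto (fun n : ℕ => ⨆ i : ℕ, |lamC i - lamN n ω i|) atTop (𝓝 0) ∧
      -- (ii) convergence of the spectral projectors
      Tendsto (fun n : ℕ =>
          ‖(∑ i ∈ Δ, rankOne (eC i) (eC i))
            - ∑ i ∈ Δ, rankOne (eN n ω i) (eN n ω i)‖) atTop (𝓝 0) ∧
      -- the convergences occur with the same rate as ‖C_n − C‖ → 0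
      (∀ n : ℕ, (⨆ i : ℕ, |lamC i - lamN n ω i|) ≤ ‖CovEmp X φ n ω - CovOp P X φ‖) ∧
      (∀ n : ℕ,
        ‖(∑ i ∈ Δ, rankOne (eC i) (eC i))
            - ∑ i ∈ Δ, rankOne (eN n ω i) (eN n ω i)‖
          ≤ (4 / g) * ‖CovEmp X φ n ω - CovOp P X φ‖) := by
    classical
  -- the canonical space and shift
  set π : Ω → (ℤ → E) := fun ω => fun t => X t ω with hπdef
  set T : (ℤ → E) → (ℤ → E) := fun f => fun t => f (t + 1) with hTdef
  set ν : Measure (ℤ → E) := Measure.map π P with hνdef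
  have hπm : Measurable π := measurable_pi_lambda _ fun t => hXm t
  haveI hνprob : IsProbabilityMeasure ν := Measure.isProbabilityMeasure_map hπm.aemeasurable
  -- the integrand
  set F : (ℤ → E) → (H →L[ℝ] H) := fun f => rankOne (φ (f 0)) (φ (f 0)) with hFdef
  have hrcont : Continuous fun v : H => rankOne v v := by
    have h1 : Continuous fun v : H => innerSL ℝ v := (innerSL ℝ).continuous
    have h2 : Continuous fun v : H =>
        (ContinuousLinearMap.smulRightL ℝ H H) (innerSL ℝ v) :=
      (ContinuousLinearMap.smulRightL ℝ H H).continuous.comp h1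
    exact h2.clm_apply continuous_id
  have hrankOne_norm : ∀ v : H, ‖rankOne v v‖ ≤ ‖v‖ ^ 2 := by
    intro v
    refine ContinuousLinearMap.opNorm_le_bound _ (by positivity) fun z => ?_
    have h1 : rankOne v v z = ⟪v, z⟫ • v := rfl
    rw [h1, norm_smul]
    calc ‖(⟪v, z⟫ : ℝ)‖ * ‖v‖ ≤ (‖v‖ * ‖z‖) * ‖v‖ :=
        mul_le_mul_of_nonneg_right (norm_inner_le_norm v z) (norm_nonneg v)
      _ = ‖v‖ ^ 2 * ‖z‖ := by ring
  have hFsm : StronglyMeasurable F :=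
    hrcont.comp_stronglyMeasurable ((hφ.comp (measurable_pi_apply 0)).stronglyMeasurable)
  -- integrability
  have hnormsq : Integrable (fun ω => ‖φ (X 0 ω)‖ ^ 2) P := by
    have h := hL2.integrable_norm_rpow (by norm_num) (by norm_num)
    refine h.congr (Eventually.of_forall fun ω => ?_)
    have h2 : ((2:ENNReal).toReal) = ((2:ℕ):ℝ) := by norm_num
    rw [h2]
    exact Real.rpow_natCast _ 2
  have hFπsm : StronglyMeasurable (fun ω => F (π ω)) :=
    hrcont.comp_stronglyMeasurable ((hφ.comp (hXm 0)).stronglyMeasurable)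
  have hFπi : Integrable (fun ω => F (π ω)) P := by
    refine Integrable.mono' hnormsq hFπsm.aestronglyMeasurable
      (Eventually.of_forall fun ω => ?_)
    exact hrankOne_norm (φ (X 0 ω))
  have hFi : Integrable F ν := by
    rw [hνdef, integrable_map_measure (by rw [← hνdef]; exact hFsm.aestronglyMeasurable)
      hπm.aemeasurable]
    exact hFπi
  have hIeq : ∫ f, F f ∂ν = CovOp P X φ := by
    rw [hνdef, integral_map hπm.aemeasurable (by rw [← hνdef]; exact hFsm.aestronglyMeasurable)]
    rfl
  -- Birkhoff
  have hbk := birkhoff_banach hergodic hFi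
  rw [hIeq] at hbk
  have hshift : ∀ᵐ f ∂ν,
      Tendsto (fun n => birkhoffAverage ℝ T F n (T f)) atTop (𝓝 (CovOp P X φ)) :=
    hergodic.toMeasurePreserving.quasiMeasurePreserving.tendsto_ae.eventually hbk
  have hPae : ∀ᵐ ω ∂P,
      Tendsto (fun n => birkhoffAverage ℝ T F n (T (π ω))) atTop (𝓝 (CovOp P X φ)) :=
    ae_of_ae_map hπm.aemeasurable hshift
  -- identify the Birkhoff averages with the empirical covariances
  have hiter : ∀ (k : ℕ) (gf : ℤ → E), T^[k] gf = fun t => gf (t + k) := by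
    intro k
    induction k with
    | zero => intro gf; funext t; simp
    | succ k ih =>
      intro gf
      rw [Function.iterate_succ_apply, ih (T gf)]
      funext t
      show gf (t + (k:ℤ) + 1) = gf (t + ((k:ℕ)+1 : ℕ))
      congr 1
      push_cast
      ring
  have hemp : ∀ (n : ℕ) (ω : Ω), CovEmp X φ n ω = birkhoffAverage ℝ T F n (T (π ω)) := by
    intro n ω
    rw [CovEmp, birkhoffAverage, birkhoffSum]
    congr 1
    rw [← Finset.Ico_add_one_right_eq_Icc, Finset.sum_Ico_eq_sum_range]
    refine Finset.sum_congr rfl fun i _ => ?_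
    have h1 : T^[i] (T (π ω)) = T^[i+1] (π ω) := (Function.iterate_succ_apply T i (π ω)).symm
    rw [h1, hiter (i+1) (π ω)]
    have h2 : ((1 + i : ℕ) : ℤ) = (0 : ℤ) + ((i + 1 : ℕ) : ℤ) := by push_cast; ring
    show rankOne (φ (X ((1 + i : ℕ) : ℤ) ω)) (φ (X ((1 + i : ℕ) : ℤ) ω))
      = rankOne (φ (π ω ((0:ℤ) + ((i+1 : ℕ) : ℤ)))) (φ (π ω ((0:ℤ) + ((i+1 : ℕ) : ℤ))))
    rw [h2]
  -- conclude
  filter_upwards [hPae] with ω hω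
  have htendop : Tendsto (fun n => CovEmp X φ n ω) atTop (𝓝 (CovOp P X φ)) := by
    refine Tendsto.congr (fun n => (hemp n ω).symm) hω
  have hnorm0 : Tendsto (fun n => ‖CovEmp X φ n ω - CovOp P X φ‖) atTop (𝓝 0) :=
    tendsto_iff_norm_sub_tendsto_zero.1 htendop
  have hweylN : ∀ (n : ℕ) (i : ℕ),
      |lamC i - lamN n ω i| ≤ ‖CovEmp X φ n ω - CovOp P X φ‖ := by
    intro n i
    have h := weyl heC hspanC hdiagC hmonoC (heN n ω) (hspanN n ω) (hdiagN n ω) (hmonoN n ω) i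
    rwa [norm_sub_rev] at h
  have hsup_le : ∀ n : ℕ,
      (⨆ i : ℕ, |lamC i - lamN n ω i|) ≤ ‖CovEmp X φ n ω - CovOp P X φ‖ :=
    fun n => ciSup_le fun i => hweylN n i
  have hsup_nonneg : ∀ n : ℕ, 0 ≤ ⨆ i : ℕ, |lamC i - lamN n ω i| :=
    fun n => Real.iSup_nonneg fun i => abs_nonneg _
  have hdk : ∀ n : ℕ,
      ‖(∑ i ∈ Δ, rankOne (eC i) (eC i)) - ∑ i ∈ Δ, rankOne (eN n ω i) (eN n ω i)‖
        ≤ (4 / g) * ‖CovEmp X φ n ω - CovOp P X φ‖ := by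
    intro n
    have h := davis_kahan heC hspanC hdiagC hmonoC (heN n ω) (hspanN n ω) (hdiagN n ω)
      (hmonoN n ω) hg Δ hΔ hgap
    rwa [norm_sub_rev (CovOp P X φ)] at h
  refine ⟨?_, ?_, hsup_le, hdk⟩
  · exact squeeze_zero hsup_nonneg hsup_le hnorm0
  · refine squeeze_zero (fun n => norm_nonneg _) hdk ?_
    have h := hnorm0.const_mul (4 / g)
    simpa using h
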